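/- Let q be an odd prime power, G = GL₂(F_q), Z its center and U the upper unitriangular subgroup. Fix a nontrivial additive character ψ of F_q and a character χ of Z, and let (χ ⊗ ψ) be the character of ZU sending z·u to χ(z)ψ(u₁₂). Then for any irreducible representation ρ of G induced from the Borel by a pair of distinct characters (χ₁, χ₂) of F_qˣ with χ₁χ₂ restricting to χ on Z, the multiplicity of ρ in Ind_{ZU}^G(χ ⊗ ψ) equals 1; i.e., the Gelfand–Graev representation Ind_{ZU}^G(χ ⊗ ψ) is multiplicity-free. -/

import Mathlib

open Matrix

variable {G : Type*} [Group G]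

/-- A representation is irreducible if it is nonzero and its only invariant
subspaces are `⊥` and `⊤`. -/
def IsIrrep {V : Type*} [AddCommGroup V] [Module ℂ V] (ρ : Representation ℂ G V) : Prop :=
  Nontrivial V ∧
    ∀ W : Submodule ℂ V, (∀ g : G, ∀ v ∈ W, ρ g v ∈ W) → W = ⊥ ∨ W = ⊤

/-- The space of `G`-equivariant linear maps between two representations. -/
def equivHoms {V W : Type*} [AddCommGroup V] [Module ℂ V] [AddCommGroup W] [Module ℂ W]
    (ρ : Representation ℂ G V) (σ : Representation ℂ G W) :
    Submodule ℂ (V →ₗ[ℂ] W) where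
  carrier := {f | ∀ (g : G) (v : V), f (ρ g v) = σ g (f v)}
  add_mem' := by
    intro f h hf hh g v
    simp [hf g v, hh g v]
  zero_mem' := by intro g v; simp
  smul_mem' := by
    intro c f hf g v
    simp [hf g v]

/-- The carrier of the representation of `G` induced from a representation `θ` of a
subgroup `H`: functions `f : G → V` with `f (b·g) = θ b (f g)`. -/
def indCarrier (H : Subgroup G) {V : Type*} [AddCommGroup V] [Module ℂ V]
    (θ : Representation ℂ H V) : Submodule ℂ (G → V) where
  carrier := {f | ∀ (b : H) (g : G), f (↑b * g) = θ b (f g)}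
  add_mem' := by
    intro f h hf hh b g
    simp [hf b g, hh b g]
  zero_mem' := by intro b g; simp
  smul_mem' := by
    intro c f hf b g
    simp [hf b g]

/-- The representation of `G` induced from a representation `θ` of a subgroup `H`,
acting by right translation. -/
def indRep (H : Subgroup G) {V : Type*} [AddCommGroup V] [Module ℂ V]
    (θ : Representation ℂ H V) : Representation ℂ G (indCarrier H θ) where
  toFun g :=
    { toFun := fun f => ⟨fun x => (f : G → V) (x * g), by
        intro b x
        have h := f.2 b (x * g)
        simpa [mul_assoc] using h⟩
      map_add' := by intro f h; rfl
      map_smul' := by intro c f; rfl }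
  map_one' := by
    apply LinearMap.ext
    intro f
    apply Subtype.ext
    funext x
    simp
  map_mul' := by
    intro g₁ g₂
    apply LinearMap.ext
    intro f
    apply Subtype.ext
    funext x
    simp [mul_assoc]

/-- The Borel subgroup of upper triangular matrices in `GL₂(R)`. -/
def borelGL2 (R : Type*) [CommRing R] : Subgroup (GL (Fin 2) R) where
  carrier := {g | g.val 1 0 = 0}
  one_mem' := by
    simp [Units.val_one, Matrix.one_apply]
  mul_mem' := by
    intro a b ha hb
    simp only [Set.mem_setOf_eq, Units.val_mul, Matrix.mul_apply, Fin.sum_univ_two] at *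
    simp [ha, hb]
  inv_mem' := by
    intro g hg
    simp only [Set.mem_setOf_eq] at *
    have h : (g⁻¹).val = (g.val)⁻¹ := by
      simp [Matrix.coe_units_inv]
    rw [h, Matrix.inv_def, Matrix.adjugate_fin_two]
    simp [hg]

/-- The subgroup `ZU` of `GL₂(F)` of matrices `[[a, u], [0, a]]` with `a` a unit. -/
def zuGL2 (F : Type*) [Field F] [DecidableEq F] : Subgroup (GL (Fin 2) F) where
  carrier := {g | g.val 1 0 = 0 ∧ g.val 0 0 = g.val 1 1}
  one_mem' := by
    constructor <;> simp [Units.val_one, Matrix.one_apply]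
  mul_mem' := by
    intro a b ha hb
    simp only [Set.mem_setOf_eq, Units.val_mul, Matrix.mul_apply, Fin.sum_univ_two] at *
    constructor
    · simp [ha.1, hb.1]
    · simp [ha.1, hb.1, ha.2, hb.2]
  inv_mem' := by
    intro g hg
    simp only [Set.mem_setOf_eq] at *
    have h : (g⁻¹).val = (g.val)⁻¹ := by
      simp [Matrix.coe_units_inv]
    rw [h, Matrix.inv_def, Matrix.adjugate_fin_two]
    constructor
    · simp [hg.1]
    · simp [hg.2]

/-!
An intertwiner `S : Ind_B^G θ → Ind_{ZU}^G η` is determined by the functional `L f = (S f)(1)`,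
which satisfies `L (u(s) • f) = ψ(s) L f`. By the Bruhat decomposition `G = B ⊔ ⋃ₜ B w u(t)`,
every `f ∈ Ind_B^G θ` is a combination of functions supported on a single coset. Since `θ` is
trivial on `U` while `ψ` is not, `L` kills the function supported on `B`, and the twisted
invariance gives `L δ_{w u(t)} = ψ(-t) L δ_w`; so `L` is a multiple of the Jacquet functional
`f ↦ ∑ₜ ψ(-t) f(w u(t))`. Conversely the Jacquet integral is a nonzero intertwiner, because
`η` and `θ` have the same central character.
-/

open Matrix.GeneralLinearGroup (upperRightHom)

namespace Representation

variable {H : Type*} [Monoid H] (θ : Representation ℂ H ℂ)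

lemma apply_eq_apply_one_mul (h : H) (c : ℂ) : θ h c = θ h 1 * c := by
  rw [mul_comm, ← smul_eq_mul, ← map_smul, smul_eq_mul, mul_one]

lemma map_mul_apply_one (h k : H) : θ (h * k) 1 = θ h 1 * θ k 1 := by
  rw [map_mul, Module.End.mul_apply, apply_eq_apply_one_mul]

end Representation

section Induced

variable (H : Subgroup G) (θ : Representation ℂ H ℂ)

open Classical in
noncomputable def indDelta (g₀ : G) : indCarrier H θ :=
  ⟨fun x => if h : x * g₀⁻¹ ∈ H then θ ⟨_, h⟩ 1 else 0, by
    intro b x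
    beta_reduce
    by_cases h : x * g₀⁻¹ ∈ H
    · have h' : ↑b * x * g₀⁻¹ ∈ H := by rw [mul_assoc]; exact H.mul_mem b.2 h
      have hb : (⟨_, h'⟩ : H) = b * ⟨_, h⟩ := Subtype.ext (mul_assoc _ _ _)
      rw [dif_pos h, dif_pos h', hb, θ.map_mul_apply_one, θ.apply_eq_apply_one_mul b (θ _ 1)]
    · have h' : ↑b * x * g₀⁻¹ ∉ H := by
        rwa [mul_assoc, H.mul_mem_cancel_left b.2]
      rw [dif_neg h, dif_neg h', map_zero]⟩

variable {H θ}

lemma indDelta_apply_of_mem {g₀ x : G} (h : x * g₀⁻¹ ∈ H) :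
    (indDelta H θ g₀ : G → ℂ) x = θ ⟨_, h⟩ 1 := by
  simp only [indDelta, dif_pos h]

lemma indDelta_apply_of_notMem {g₀ x : G} (h : x * g₀⁻¹ ∉ H) :
    (indDelta H θ g₀ : G → ℂ) x = 0 := by
  simp only [indDelta, dif_neg h]

lemma indDelta_apply_self (g₀ : G) : (indDelta H θ g₀ : G → ℂ) g₀ = 1 := by
  have h : g₀ * g₀⁻¹ ∈ H := by rw [mul_inv_cancel]; exact H.one_mem
  rw [indDelta_apply_of_mem h, show (⟨_, h⟩ : H) = 1 from Subtype.ext (mul_inv_cancel g₀),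
    θ.map_one]
  rfl

lemma indRep_indDelta (g g₀ : G) :
    indRep H θ g (indDelta H θ g₀) = indDelta H θ (g₀ * g⁻¹) := by
  ext x
  show (indDelta H θ g₀ : G → ℂ) (x * g) = _
  have hx : x * g * g₀⁻¹ = x * (g₀ * g⁻¹)⁻¹ := by group
  by_cases h : x * g * g₀⁻¹ ∈ H
  · rw [indDelta_apply_of_mem h, indDelta_apply_of_mem (hx ▸ h)]
    congr 3
  · rw [indDelta_apply_of_notMem h, indDelta_apply_of_notMem (hx ▸ h)]

lemma indDelta_mul_left (b : H) (g₀ : G) :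
    indDelta H θ (b * g₀) = θ b⁻¹ 1 • indDelta H θ g₀ := by
  ext x
  show (indDelta H θ (b * g₀) : G → ℂ) x = θ b⁻¹ 1 * (indDelta H θ g₀ : G → ℂ) x
  have hx : x * (↑b * g₀)⁻¹ = x * g₀⁻¹ * ↑b⁻¹ := by simp [mul_assoc]
  by_cases h : x * g₀⁻¹ ∈ H
  · have h' : x * (↑b * g₀)⁻¹ ∈ H := hx ▸ H.mul_mem h b⁻¹.2
    rw [indDelta_apply_of_mem h, indDelta_apply_of_mem h', mul_comm,
      ← θ.map_mul_apply_one]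
    exact congrArg (θ · 1) (Subtype.ext hx)
  · have h' : x * (↑b * g₀)⁻¹ ∉ H := by rwa [hx, H.mul_mem_cancel_right b⁻¹.2]
    rw [indDelta_apply_of_notMem h, indDelta_apply_of_notMem h', mul_zero]

lemma eq_sum_indDelta {ι : Type*} [Fintype ι] (r : ι → G)
    (hr : ∀ x, ∃! i, x * (r i)⁻¹ ∈ H) (f : indCarrier H θ) :
    f = ∑ i, (f : G → ℂ) (r i) • indDelta H θ (r i) := by
  ext x
  obtain ⟨i, hi, huniq⟩ := hr x
  rw [AddSubmonoidClass.coe_finsetSum, Finset.sum_apply, Finset.sum_eq_single i]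
  · have hf := f.2 ⟨_, hi⟩ (r i)
    rw [inv_mul_cancel_right] at hf
    rw [SetLike.val_smul, Pi.smul_apply, indDelta_apply_of_mem hi, hf,
      θ.apply_eq_apply_one_mul, smul_eq_mul, mul_comm]
  · intro j _ hj
    rw [SetLike.val_smul, Pi.smul_apply,
      indDelta_apply_of_notMem fun h => hj (huniq j h), smul_zero]
  · exact fun h => absurd (Finset.mem_univ i) h

end Induced

section Intertwiners

variable {V W : Type*} [AddCommGroup V] [Module ℂ V] [AddCommGroup W] [Module ℂ W]
  {ρ : Representation ℂ G V} {K : Subgroup G} {η : Representation ℂ K W}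
  {S : V →ₗ[ℂ] indCarrier K η}

lemma equivHoms_indRep_apply (hS : S ∈ equivHoms ρ (indRep K η)) (v : V) (x : G) :
    (S v : G → W) x = (S (ρ x v) : G → W) 1 := by
  rw [hS x v]
  show _ = (S v : G → W) (1 * x)
  rw [one_mul]

lemma equivHoms_indRep_apply_one_of_mem (hS : S ∈ equivHoms ρ (indRep K η)) (k : K) (v : V) :
    (S (ρ k v) : G → W) 1 = η k ((S v : G → W) 1) := by
  rw [← equivHoms_indRep_apply hS, ← (S v).2 k 1, mul_one]

lemma equivHoms_indRep_eq_smul {T : V →ₗ[ℂ] indCarrier K η}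
    (hS : S ∈ equivHoms ρ (indRep K η)) (hT : T ∈ equivHoms ρ (indRep K η)) (c : ℂ)
    (h : ∀ v, (S v : G → W) 1 = c • (T v : G → W) 1) : S = c • T := by
  ext v x
  show (S v : G → W) x = c • (T v : G → W) x
  rw [equivHoms_indRep_apply hS, h, ← equivHoms_indRep_apply hT]

end Intertwiners

section GL2

variable {F : Type*} [Field F]

/-- `w * upperRightHom t` for the Weyl element `w = [[0, 1], [1, 0]]`. -/
def bigCellRep (t : F) : GL (Fin 2) F :=
  ⟨!![0, 1; 1, t], !![-t, 1; 1, 0], by simp [one_fin_two], by simp [one_fin_two]⟩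

def bruhatRep (i : Option F) : GL (Fin 2) F :=
  i.elim 1 bigCellRep

@[simp] lemma bruhatRep_none : bruhatRep none = (1 : GL (Fin 2) F) := rfl

@[simp] lemma bruhatRep_some (t : F) : bruhatRep (some t) = bigCellRep t := rfl

lemma bigCellRep_mul_upperRightHom (t s : F) :
    bigCellRep t * upperRightHom s = bigCellRep (t + s) := by
  ext i j
  fin_cases i <;> fin_cases j <;> simp [bigCellRep, add_comm]

lemma upperRightHom_mem_borelGL2 (s : F) : upperRightHom s ∈ borelGL2 F := by
  show (upperRightHom s).val 1 0 = 0
  simp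

lemma scalar_mem_borelGL2 (a : Fˣ) : GeneralLinearGroup.scalar (Fin 2) a ∈ borelGL2 F := by
  show (GeneralLinearGroup.scalar (Fin 2) a).val 1 0 = 0
  simp [GeneralLinearGroup.coe_scalar]

lemma mul_inv_bigCellRep_mem_borelGL2_iff (x : GL (Fin 2) F) (t : F) :
    x * (bigCellRep t)⁻¹ ∈ borelGL2 F ↔ x.val 1 1 = t * x.val 1 0 := by
  show (x * (bigCellRep t)⁻¹).val 1 0 = 0 ↔ _
  rw [Units.val_mul, Matrix.mul_apply, Fin.sum_univ_two]
  simp only [bigCellRep, Units.inv_mk, of_apply, cons_val', cons_val_zero, cons_val_fin_one,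
    cons_val_one, mul_comm, neg_mul, one_mul]
  exact neg_add_eq_zero.trans eq_comm

lemma val_one_one_ne_zero_of_mem_borelGL2 {x : GL (Fin 2) F} (hx : x ∈ borelGL2 F) :
    x.val 1 1 ≠ 0 := by
  have hdet := (GeneralLinearGroup.det x).ne_zero
  rw [GeneralLinearGroup.val_det_apply, Matrix.det_fin_two, hx, mul_zero, sub_zero] at hdet
  exact right_ne_zero_of_mul hdet

lemma existsUnique_mul_inv_bruhatRep_mem_borelGL2 (x : GL (Fin 2) F) :
    ∃! i, x * (bruhatRep i)⁻¹ ∈ borelGL2 F := by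
  by_cases h : x.val 1 0 = 0
  · refine ⟨none, by beta_reduce; rwa [bruhatRep_none, inv_one, mul_one], ?_⟩
    rintro (_ | t) ht
    · rfl
    · rw [bruhatRep_some, mul_inv_bigCellRep_mem_borelGL2_iff, h, mul_zero] at ht
      exact absurd ht (val_one_one_ne_zero_of_mem_borelGL2 h)
  · refine ⟨some (x.val 1 1 / x.val 1 0), ?_, ?_⟩
    · beta_reduce
      rw [bruhatRep_some, mul_inv_bigCellRep_mem_borelGL2_iff, div_mul_cancel₀ _ h]
    · rintro (_ | t) ht
      · rw [bruhatRep_none, inv_one, mul_one] at ht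
        exact absurd ht h
      · rw [bruhatRep_some, mul_inv_bigCellRep_mem_borelGL2_iff] at ht
        rw [ht, mul_div_cancel_right₀ _ h]

variable [DecidableEq F]

lemma upperRightHom_mem_zuGL2 (s : F) : upperRightHom s ∈ zuGL2 F := by
  show (upperRightHom s).val 1 0 = 0 ∧ (upperRightHom s).val 0 0 = (upperRightHom s).val 1 1
  simp

lemma val_zero_zero_ne_zero_of_mem_zuGL2 {z : GL (Fin 2) F} (hz : z ∈ zuGL2 F) :
    z.val 0 0 ≠ 0 :=
  hz.2 ▸ val_one_one_ne_zero_of_mem_borelGL2 hz.1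

lemma bigCellRep_mul_of_mem_zuGL2 {z : GL (Fin 2) F} (hz : z ∈ zuGL2 F) (t : F) :
    bigCellRep t * z = GeneralLinearGroup.scalar (Fin 2)
      (Units.mk0 _ (val_zero_zero_ne_zero_of_mem_zuGL2 hz)) *
        bigCellRep (t + z.val 0 1 * (z.val 0 0)⁻¹) := by
  have h0 := val_zero_zero_ne_zero_of_mem_zuGL2 hz
  obtain ⟨h10, h11⟩ := hz
  ext i j
  fin_cases i <;> fin_cases j <;>
    simp [bigCellRep, Matrix.mul_apply, Fin.sum_univ_two, GeneralLinearGroup.coe_scalar, h10,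
      ← h11, mul_add, mul_left_comm _ (z.val 0 1), h0, add_comm, mul_comm t]

end GL2

section Whittaker

variable {F : Type*} [Field F] [Fintype F] {θ : Representation ℂ (borelGL2 F) ℂ}
  {ψ : AddChar F ℂ}

variable (θ ψ) in
noncomputable def jacquet : indCarrier (borelGL2 F) θ →ₗ[ℂ] (GL (Fin 2) F → ℂ) where
  toFun f x := ∑ t, ψ (-t) * (f : GL (Fin 2) F → ℂ) (bigCellRep t * x)
  map_add' f g := by
    ext x
    simp only [Submodule.coe_add, Pi.add_apply, mul_add, Finset.sum_add_distrib]
  map_smul' c f := by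
    ext x
    simp only [SetLike.val_smul, Pi.smul_apply, smul_eq_mul, RingHom.id_apply, Finset.mul_sum]
    exact Finset.sum_congr rfl fun t _ => mul_left_comm _ _ _

lemma jacquet_apply (f : indCarrier (borelGL2 F) θ) (x : GL (Fin 2) F) :
    jacquet θ ψ f x = ∑ t, ψ (-t) * (f : GL (Fin 2) F → ℂ) (bigCellRep t * x) :=
  rfl

lemma jacquet_indRep (g : GL (Fin 2) F) (f : indCarrier (borelGL2 F) θ) (x : GL (Fin 2) F) :
    jacquet θ ψ (indRep _ θ g f) x = jacquet θ ψ f (x * g) := by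
  simp only [jacquet_apply, ← mul_assoc]
  rfl

lemma jacquet_indDelta_apply_one :
    jacquet θ ψ (indDelta _ θ (bigCellRep 0)) 1 = 1 := by
  rw [jacquet_apply, Finset.sum_eq_single 0]
  · rw [neg_zero, AddChar.map_zero_eq_one, mul_one, one_mul, indDelta_apply_self]
  · intro t _ ht
    have hmem : bigCellRep t * (bruhatRep (some t))⁻¹ ∈ borelGL2 F := by
      rw [bruhatRep_some, mul_inv_cancel]; exact one_mem _
    have hne : bigCellRep t * (bigCellRep 0)⁻¹ ∉ borelGL2 F := fun h =>
      ht (Option.some_injective _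
        ((existsUnique_mul_inv_bruhatRep_mem_borelGL2 (bigCellRep t)).unique hmem h))
    rw [mul_one, indDelta_apply_of_notMem hne, mul_zero]
  · exact fun h => absurd (Finset.mem_univ 0) h

lemma whittaker_eq_mul_jacquet (hψ : ψ ≠ 1)
    (hθ : ∀ s, θ ⟨_, upperRightHom_mem_borelGL2 s⟩ 1 = 1)
    (L : indCarrier (borelGL2 F) θ →ₗ[ℂ] ℂ)
    (hL : ∀ s f, L (indRep _ θ (upperRightHom s) f) = ψ s * L f)
    (f : indCarrier (borelGL2 F) θ) :
    L f = L (indDelta _ θ (bigCellRep 0)) * jacquet θ ψ f 1 := by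
  have hB : L (indDelta _ θ 1) = 0 := by
    obtain ⟨s, hs⟩ := AddChar.ne_one_iff.1 hψ
    have hfix : indRep _ θ (upperRightHom s) (indDelta _ θ 1) = indDelta _ θ 1 := by
      have h := indDelta_mul_left (θ := θ) (⟨_, upperRightHom_mem_borelGL2 s⟩⁻¹) 1
      rw [inv_inv, hθ, one_smul, mul_one] at h
      rw [indRep_indDelta, one_mul]
      exact h
    have h := hL s (indDelta _ θ 1)
    rw [hfix] at h
    by_contra hne
    exact hs ((mul_eq_right₀ hne).1 h.symm)
  have hcell : ∀ t, L (indDelta _ θ (bigCellRep t)) =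
      ψ (-t) * L (indDelta _ θ (bigCellRep 0)) := by
    intro t
    have hshift : indRep _ θ (upperRightHom t) (indDelta _ θ (bigCellRep t)) =
        indDelta _ θ (bigCellRep 0) := by
      rw [indRep_indDelta, ← zero_add t, ← bigCellRep_mul_upperRightHom, zero_add,
        mul_inv_cancel_right]
    rw [← hshift, hL, ← mul_assoc, ← AddChar.map_add_eq_mul, neg_add_cancel,
      AddChar.map_zero_eq_one, one_mul]
  conv_lhs => rw [eq_sum_indDelta bruhatRep existsUnique_mul_inv_bruhatRep_mem_borelGL2 f]
  rw [map_sum, Fintype.sum_option, jacquet_apply, Finset.mul_sum]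
  simp only [map_smul, bruhatRep_none, bruhatRep_some, hB, smul_zero, zero_add, mul_one]
  refine Finset.sum_congr rfl fun t _ => ?_
  rw [hcell, smul_eq_mul]
  ring

variable [DecidableEq F] {η : Representation ℂ (zuGL2 F) ℂ}

/-- `hθη` says that `η` is the character `z u(c) ↦ θ(z) ψ(c)` of `ZU`. -/
lemma jacquet_mem
    (hθη : ∀ z : zuGL2 F, η z 1 =
      θ ⟨_, scalar_mem_borelGL2 (Units.mk0 _ (val_zero_zero_ne_zero_of_mem_zuGL2 z.2))⟩ 1 *
        ψ (z.val.val 0 1 * (z.val.val 0 0)⁻¹))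
    (f : indCarrier (borelGL2 F) θ) : jacquet θ ψ f ∈ indCarrier (zuGL2 F) η := by
  intro z x
  set c := z.val.val 0 1 * (z.val.val 0 0)⁻¹
  set a : borelGL2 F :=
    ⟨_, scalar_mem_borelGL2 (Units.mk0 _ (val_zero_zero_ne_zero_of_mem_zuGL2 z.2))⟩
  have hterm : ∀ t, ψ (-t) * (f : GL (Fin 2) F → ℂ) (bigCellRep t * (z * x)) =
      θ a 1 * ψ c * (ψ (-(t + c)) * (f : GL (Fin 2) F → ℂ) (bigCellRep (t + c) * x)) := by
    intro t
    rw [← mul_assoc, bigCellRep_mul_of_mem_zuGL2 z.2, mul_assoc, f.2 a,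
      θ.apply_eq_apply_one_mul, show -t = c + -(t + c) by ring, AddChar.map_add_eq_mul]
    ring
  rw [η.apply_eq_apply_one_mul, hθη, jacquet_apply, jacquet_apply, Finset.sum_congr rfl
    fun t _ => hterm t, ← Finset.mul_sum]
  congr 1
  exact Equiv.sum_comp (Equiv.addRight c)
    fun t => ψ (-t) * (f : GL (Fin 2) F → ℂ) (bigCellRep t * x)

end Whittaker

section PrincipalSeries

variable {F : Type*} [Field F]

lemma principalSeries_apply_one {χ₁ χ₂ : Fˣ →* ℂˣ} {θ : Representation ℂ (borelGL2 F) ℂ}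
    (hθ : ∀ (b : borelGL2 F) (h0 : IsUnit (b.val.val 0 0)) (h1 : IsUnit (b.val.val 1 1)),
      θ b = ((χ₁ h0.unit : ℂˣ) * (χ₂ h1.unit : ℂˣ) : ℂˣ).val • (LinearMap.id : ℂ →ₗ[ℂ] ℂ))
    (b : borelGL2 F) (u v : Fˣ) (hu : b.val.val 0 0 = u) (hv : b.val.val 1 1 = v) :
    θ b 1 = χ₁ u * χ₂ v := by
  have h0 : IsUnit (b.val.val 0 0) := hu ▸ u.isUnit
  have h1 : IsUnit (b.val.val 1 1) := hv ▸ v.isUnit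
  rw [hθ b h0 h1, show h0.unit = u from Units.ext (h0.unit_spec.trans hu),
    show h1.unit = v from Units.ext (h1.unit_spec.trans hv)]
  simp

lemma gelfandGraev_apply_one [DecidableEq F] {χ : Fˣ →* ℂˣ} {ψ : AddChar F ℂ}
    {η : Representation ℂ (zuGL2 F) ℂ}
    (hη : ∀ (g : zuGL2 F) (h0 : IsUnit (g.val.val 0 0)),
      η g = ((χ h0.unit : ℂˣ).val * ψ (g.val.val 0 1 * (g.val.val 0 0)⁻¹))
        • (LinearMap.id : ℂ →ₗ[ℂ] ℂ))
    (z : zuGL2 F) (a : Fˣ) (ha : z.val.val 0 0 = a) :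
    η z 1 = χ a * ψ (z.val.val 0 1 * (z.val.val 0 0)⁻¹) := by
  have h0 : IsUnit (z.val.val 0 0) := ha ▸ a.isUnit
  rw [hη z h0, show h0.unit = a from Units.ext (h0.unit_spec.trans ha)]
  simp

variable {χ₁ χ₂ : Fˣ →* ℂˣ} {θ : Representation ℂ (borelGL2 F) ℂ}
  (hθ : ∀ (b : borelGL2 F) (h0 : IsUnit (b.val.val 0 0)) (h1 : IsUnit (b.val.val 1 1)),
    θ b = ((χ₁ h0.unit : ℂˣ) * (χ₂ h1.unit : ℂˣ) : ℂˣ).val • (LinearMap.id : ℂ →ₗ[ℂ] ℂ))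
include hθ

lemma principalSeries_apply_upperRightHom (s : F) :
    θ ⟨_, upperRightHom_mem_borelGL2 s⟩ 1 = 1 := by
  rw [principalSeries_apply_one hθ _ 1 1 (by simp) (by simp)]
  simp

variable [DecidableEq F] {χ : Fˣ →* ℂˣ} {ψ : AddChar F ℂ} {η : Representation ℂ (zuGL2 F) ℂ}
  (hη : ∀ (g : zuGL2 F) (h0 : IsUnit (g.val.val 0 0)),
    η g = ((χ h0.unit : ℂˣ).val * ψ (g.val.val 0 1 * (g.val.val 0 0)⁻¹))
      • (LinearMap.id : ℂ →ₗ[ℂ] ℂ))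
include hη

omit hθ in
lemma gelfandGraev_apply_upperRightHom (s : F) :
    η ⟨_, upperRightHom_mem_zuGL2 s⟩ 1 = ψ s := by
  rw [gelfandGraev_apply_one hη _ 1 (by simp)]
  simp

lemma gelfandGraev_apply_one_eq_principalSeries (hcen : χ₁ * χ₂ = χ) (z : zuGL2 F) :
    η z 1 =
      θ ⟨_, scalar_mem_borelGL2 (Units.mk0 _ (val_zero_zero_ne_zero_of_mem_zuGL2 z.2))⟩ 1 *
        ψ (z.val.val 0 1 * (z.val.val 0 0)⁻¹) := by
  set a := Units.mk0 _ (val_zero_zero_ne_zero_of_mem_zuGL2 z.2)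
  rw [gelfandGraev_apply_one hη z a rfl, principalSeries_apply_one hθ _ a a
    (by simp [GeneralLinearGroup.coe_scalar]) (by simp [GeneralLinearGroup.coe_scalar]), ← hcen]
  simp

end PrincipalSeries

set_option synthInstance.maxHeartbeats 1000000
set_option maxHeartbeats 1000000
set_option maxSynthPendingDepth 5

theorem stmt_14_general {F : Type*} [Field F] [Fintype F] [DecidableEq F]
    (χ₁ χ₂ χ : Fˣ →* ℂˣ) (ψ : AddChar F ℂ) (hψ : ψ ≠ 1)
    (hcen : χ₁ * χ₂ = χ)
    (θ : Representation ℂ (borelGL2 F) ℂ)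
    (hθ : ∀ (b : borelGL2 F) (h0 : IsUnit (b.val.val 0 0)) (h1 : IsUnit (b.val.val 1 1)),
        θ b = ((χ₁ h0.unit : ℂˣ) * (χ₂ h1.unit : ℂˣ) : ℂˣ).val • (LinearMap.id : ℂ →ₗ[ℂ] ℂ))
    (η : Representation ℂ (zuGL2 F) ℂ)
    (hη : ∀ (g : zuGL2 F) (h0 : IsUnit (g.val.val 0 0)),
        η g = ((χ h0.unit : ℂˣ).val * ψ (g.val.val 0 1 * (g.val.val 0 0)⁻¹))
          • (LinearMap.id : ℂ →ₗ[ℂ] ℂ)) :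
    Module.finrank ℂ (equivHoms (indRep (borelGL2 F) θ) (indRep (zuGL2 F) η)) = 1 := by
  let T := (jacquet θ ψ).codRestrict (indCarrier (zuGL2 F) η)
    (jacquet_mem (gelfandGraev_apply_one_eq_principalSeries hθ hη hcen))
  have hT : T ∈ equivHoms (indRep _ θ) (indRep _ η) := fun g f =>
    Subtype.ext (funext (jacquet_indRep g f))
  have hT1 : (T (indDelta _ θ (bigCellRep 0)) : GL (Fin 2) F → ℂ) 1 = 1 :=
    jacquet_indDelta_apply_one
  refine (finrank_eq_one_iff_of_nonzero' (⟨T, hT⟩ : equivHoms _ _) fun h => ?_).2 fun S => ?_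
  · have h1 := congrArg (fun S : equivHoms (indRep _ θ) (indRep _ η) =>
      (S.1 (indDelta _ θ (bigCellRep 0)) : GL (Fin 2) F → ℂ) 1) h
    simp [hT1] at h1
  · let L : indCarrier (borelGL2 F) θ →ₗ[ℂ] ℂ :=
      LinearMap.proj 1 ∘ₗ (indCarrier _ η).subtype ∘ₗ S.1
    have hL : ∀ s f, L (indRep _ θ (upperRightHom s) f) = ψ s * L f := fun s f => by
      show (S.1 _ : GL (Fin 2) F → ℂ) 1 = ψ s * (S.1 f : GL (Fin 2) F → ℂ) 1
      rw [equivHoms_indRep_apply_one_of_mem S.2 ⟨_, upperRightHom_mem_zuGL2 s⟩,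
        η.apply_eq_apply_one_mul, gelfandGraev_apply_upperRightHom hη]
    exact ⟨L (indDelta _ θ (bigCellRep 0)), Subtype.ext (equivHoms_indRep_eq_smul S.2 hT _
      fun f => whittaker_eq_mul_jacquet hψ (principalSeries_apply_upperRightHom hθ) L hL f).symm⟩

/-- The Gelfand–Graev module with fixed central character is multiplicity-free on
principal series: for distinct characters `χ₁ ≠ χ₂` of `F_qˣ` with `χ₁χ₂ = χ` on the
center, and `ψ` a nontrivial additive character, the multiplicity of
`Ind_B^G(χ₁,χ₂)` in `Ind_{ZU}^G(χ ⊗ ψ)` equals `1`. -/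
theorem stmt_14 {F : Type*} [Field F] [Fintype F] [DecidableEq F]
    (hq : Odd (Fintype.card F))
    (χ₁ χ₂ χ : Fˣ →* ℂˣ) (ψ : AddChar F ℂ) (hψ : ψ ≠ 1)
    (h12 : χ₁ ≠ χ₂) (hcen : χ₁ * χ₂ = χ)
    (θ : Representation ℂ (borelGL2 F) ℂ)
    (hθ : ∀ (b : borelGL2 F) (h0 : IsUnit (b.val.val 0 0)) (h1 : IsUnit (b.val.val 1 1)),
        θ b = ((χ₁ h0.unit : ℂˣ) * (χ₂ h1.unit : ℂˣ) : ℂˣ).val • (LinearMap.id : ℂ →ₗ[ℂ] ℂ))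
    (η : Representation ℂ (zuGL2 F) ℂ)
    (hη : ∀ (g : zuGL2 F) (h0 : IsUnit (g.val.val 0 0)),
        η g = ((χ h0.unit : ℂˣ).val * ψ (g.val.val 0 1 * (g.val.val 0 0)⁻¹))
          • (LinearMap.id : ℂ →ₗ[ℂ] ℂ)) :
    Module.finrank ℂ (equivHoms (indRep (borelGL2 F) θ) (indRep (zuGL2 F) η)) = 1 :=
  stmt_14_general χ₁ χ₂ χ ψ hψ hcen θ hθ η hη
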